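/- arXiv:1904.00349 — 2 statements merged into one kernel-verified Lean document; each statement's English description precedes it below -/
import Mathlib

section
/- Let M be a k×n binary d-disjunct matrix and M̄ its entrywise complement. Let D ⊆ [n] be a set of defective items with |D| = u ≤ d. Define threshold-u outcome vectors y, ȳ ∈ {0,1}^k by y_i = 1 iff |{j ∈ D : M_{ij} = 1}| ≥ u, and ȳ_i = 1 iff |{j ∈ D : M̄_{ij} = 1}| ≥ u. Define y' ∈ {0,1}^k by: y'_i = 1 if y_i = 1; y'_i = 0 if y_i = 0 and ȳ_i = 1; y'_i = 1 if y_i = 0 and ȳ_i = 0. Then y' equals the classical OR-outcome vector of D under M, i.e., y'_i = 1 iff there exists j ∈ D with M_{ij} = 1. -/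
/-- Converting threshold-u outcomes (with |D| = u) of M and its complement
recovers the classical OR-outcome vector of D under M. -/
theorem stmt_1 {k n d u : ℕ} (M : Fin k → Fin n → Bool)
    (hdisj : ∀ (j : Fin n) (S : Finset (Fin n)), S.card ≤ d → j ∉ S →
      ∃ i, M i j = true ∧ ∀ j' ∈ S, M i j' = false)
    (D : Finset (Fin n)) (hu : 1 ≤ u) (hcard : D.card = u) (hud : u ≤ d)
    (y ybar y' : Fin k → Bool)
    (hy : ∀ i, y i = true ↔ u ≤ (D.filter (fun j => M i j = true)).card)
    (hybar : ∀ i, ybar i = true ↔ u ≤ (D.filter (fun j => M i j = false)).card)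
    (hy' : ∀ i, (y i = true → y' i = true)
      ∧ (y i = false → ybar i = true → y' i = false)
      ∧ (y i = false → ybar i = false → y' i = true)) :
    ∀ i : Fin k, y' i = true ↔ ∃ j ∈ D, M i j = true := by
  intro i
  have key : ∀ (P : Fin n → Prop) [DecidablePred P],
      u ≤ (D.filter P).card ↔ ∀ j ∈ D, P j := by
    intro P _
    constructor
    · intro h j hj
      have : D.filter P = D := Finset.eq_of_subset_of_card_le
        (Finset.filter_subset _ _) (hcard ▸ h)
      have := this ▸ hj
      exact (Finset.mem_filter.mp this).2
    · intro h
      rw [Finset.filter_true_of_mem h, hcard]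
  have hyi : y i = true ↔ ∀ j ∈ D, M i j = true := (hy i).trans (key _)
  have hybari : ybar i = true ↔ ∀ j ∈ D, M i j = false := (hybar i).trans (key _)
  obtain ⟨h1, h2, h3⟩ := hy' i
  constructor
  · intro hy'
    by_contra hno
    push_neg at hno
    have hall0 : ∀ j ∈ D, M i j = false := by
      intro j hj
      cases h : M i j
      · rfl
      · exact absurd h (hno j hj)
    have hbar : ybar i = true := hybari.mpr hall0
    have hD : D.Nonempty := Finset.card_pos.mp (hcard ▸ hu)
    obtain ⟨j0, hj0⟩ := hD
    have hyf : y i = false := by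
      cases h : y i
      · rfl
      · exact absurd (hyi.mp h j0 hj0) (by simp [hall0 j0 hj0])
    have := h2 hyf hbar
    simp [this] at hy'
  · intro ⟨j, hj, hMij⟩
    cases h : y i
    · have hbarf : ybar i = false := by
        cases hb : ybar i
        · rfl
        · exact absurd (hybari.mp hb j hj) (by simp [hMij])
      exact h3 h hbarf
    · exact h1 h
end

section
/- Let M be a k×n binary d-disjunct matrix and let D' ⊆ [n] with |D'| ≤ d contain a positive sub-complex strictly: suppose there is a complex D_a and threshold u_a with |D' ∩ D_a| ≥ u_a, and moreover for some j₀ ∈ D', the set D' \ {j₀} still contains a positive sub-complex (|( D' \ {j₀}) ∩ D_b| ≥ u_b for some b). Then there exists a row υ with M_{υ j₀} = 1 and M_{υ j} = 0 for all j ∈ D' \ {j₀}, and in the complement matrix the threshold outcome of row υ on defective set D' is positive (ȳ_υ = 1) while ⋀_{j ∈ D'} M̄_{υ j} = 0. -/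
/-- GCmplxGT sanitization: if D' strictly contains a positive sub-complex
(removing some j₀ still leaves one), then some row υ of the d-disjunct matrix
isolates j₀ from D' \ {j₀}; the complement-row outcome on D' is positive while
the complement-row AND over D' is 0. -/
theorem stmt_15 {k n d s : ℕ} (M : Fin k → Fin n → Bool)
    (hdisj : ∀ (j : Fin n) (S : Finset (Fin n)), S.card ≤ d → j ∉ S →
      ∃ i, M i j = true ∧ ∀ j' ∈ S, M i j' = false)
    (D' : Finset (Fin n)) (hD' : D'.card ≤ d)
    (D : Fin s → Finset (Fin n)) (u : Fin s → ℕ)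
    (ha : ∃ a : Fin s, u a ≤ (D' ∩ D a).card)
    (j₀ : Fin n) (hj₀ : j₀ ∈ D')
    (hb : ∃ b : Fin s, u b ≤ ((D'.erase j₀) ∩ D b).card) :
    ∃ υ : Fin k, M υ j₀ = true ∧ (∀ j ∈ D'.erase j₀, M υ j = false) ∧
      (∃ b : Fin s, u b ≤ ((D'.filter (fun j => M υ j = false)) ∩ D b).card) ∧
      (¬ ∀ j ∈ D', (!M υ j) = true) := by
  obtain ⟨υ, hυ1, hυ2⟩ := hdisj j₀ (D'.erase j₀)
    (le_trans (Finset.card_le_card (Finset.erase_subset _ _)) hD')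
    (Finset.notMem_erase _ _)
  refine ⟨υ, hυ1, hυ2, ?_, ?_⟩
  · obtain ⟨b, hbb⟩ := hb
    refine ⟨b, le_trans hbb (Finset.card_le_card (Finset.inter_subset_inter_right ?_))⟩
    intro j hj
    exact Finset.mem_filter.mpr ⟨Finset.mem_of_mem_erase hj, hυ2 j hj⟩
  · intro h
    have := h j₀ hj₀
    simp [hυ1] at this
end
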